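/- Let G be a complete directed graph on vertex set V with |V| = n and real weights. For any Hamiltonian path P = (v_{i₁}, …, v_{iₙ}) on V, and any cut index j with 1 ≤ j ≤ n, the weight of P decomposes as w(P) = w(P¹) + w(P²) where P¹ = (v_{i₁},…,v_{i_j}) and P² = (v_{i_j},…,v_{iₙ}); hence max over Hamiltonian paths from v to u of w equals max over y and over subsets S' of size j containing v and y of (L(S', v, y) + L((V\S') ∪ {y}, y, u)). -/

import Mathlib

/-- Total weight of a path given as a list of vertices: sum of weights of consecutive edges. -/
def pathWeight {V : Type*} (w : V → V → ℝ) (p : List V) : ℝ :=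
  ((p.zip p.tail).map (fun e => w e.1 e.2)).sum

@[simp] lemma pathWeight_nil {V : Type*} (w : V → V → ℝ) : pathWeight w ([] : List V) = 0 := by
  simp [pathWeight]

@[simp] lemma pathWeight_single {V : Type*} (w : V → V → ℝ) (a : V) :
    pathWeight w [a] = 0 := by simp [pathWeight]

lemma pathWeight_cons_cons {V : Type*} (w : V → V → ℝ) (a b : V) (l : List V) :
    pathWeight w (a :: b :: l) = w a b + pathWeight w (b :: l) := by
  simp [pathWeight]

lemma pathWeight_split {V : Type*} (w : V → V → ℝ) :
    ∀ (k : ℕ) (p : List V), k + 1 ≤ p.length →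
      pathWeight w p = pathWeight w (p.take (k+1)) + pathWeight w (p.drop k)
  | 0, p, _ => by
    rcases p with _ | ⟨a, t⟩
    · simp
    · simp [pathWeight]
  | (k+1), p, h => by
    rcases p with _ | ⟨a, t⟩
    · simp at h
    · rcases t with _ | ⟨b, t⟩
      · simp at h
      · have ih := pathWeight_split w k (b :: t) (by simpa using h)
        have h1 : ((b :: t).take (k+1)) = b :: t.take k := by simp
        rw [show (a::b::t).take (k+1+1) = a :: b :: t.take k by simp,
          show (a::b::t).drop (k+1) = (b::t).drop k by simp,
          pathWeight_cons_cons, pathWeight_cons_cons, ih, h1]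
        ring

lemma pathWeight_append {V : Type*} (w : V → V → ℝ) :
    ∀ (p t : List V) (y : V), p.getLast? = some y →
      pathWeight w (p ++ t) = pathWeight w p + pathWeight w (y :: t)
  | [], _, _, h => by simp at h
  | [x], t, y, h => by
    simp only [List.getLast?_singleton, Option.some.injEq] at h
    subst h; simp
  | (a :: b :: p), t, y, h => by
    have ih := pathWeight_append w (b :: p) t y (by simpa using h)
    simp only [List.cons_append, pathWeight_cons_cons] at *
    rw [ih]; ring

/-- `L w S v u` is the maximum (as a supremum in `EReal`, so `⊥ = -∞` when no path exists)
of the weights of paths that visit every vertex of `S` exactly once, start at `v`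
and end at `u`. -/
noncomputable def maxPathWeight {V : Type*} [DecidableEq V] (w : V → V → ℝ)
    (S : Finset V) (v u : V) : EReal :=
  sSup {x : EReal | ∃ p : List V, p.Nodup ∧ p.toFinset = S ∧
    p.head? = some v ∧ p.getLast? = some u ∧ x = (pathWeight w p : EReal)}

lemma le_maxPathWeight {V : Type*} [DecidableEq V] (w : V → V → ℝ)
    (S : Finset V) (v u : V) (p : List V) (h1 : p.Nodup) (h2 : p.toFinset = S)
    (h3 : p.head? = some v) (h4 : p.getLast? = some u) :
    (pathWeight w p : EReal) ≤ maxPathWeight w S v u :=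
  le_sSup ⟨p, h1, h2, h3, h4, rfl⟩

lemma maxPathWeight_attained {V : Type*} [DecidableEq V] [Fintype V] (w : V → V → ℝ)
    (S : Finset V) (v u : V) (h : maxPathWeight w S v u ≠ ⊥) :
    ∃ p : List V, p.Nodup ∧ p.toFinset = S ∧ p.head? = some v ∧ p.getLast? = some u ∧
      maxPathWeight w S v u = (pathWeight w p : EReal) := by
  classical
  set A : Set EReal := {x : EReal | ∃ p : List V, p.Nodup ∧ p.toFinset = S ∧
    p.head? = some v ∧ p.getLast? = some u ∧ x = (pathWeight w p : EReal)} with hA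
  have hfin : A.Finite := by
    have hsub : A ⊆ (fun p : List V => ((pathWeight w p : ℝ) : EReal)) ''
        {l : List V | l.length = S.card} := by
      rintro x ⟨p, hnd, hS, -, -, rfl⟩
      exact ⟨p, by simp [← hS, List.toFinset_card_of_nodup hnd], rfl⟩
    exact ((List.finite_length_eq (α := V) (n := S.card)).image _).subset hsub
  have hne : A.Nonempty := by
    by_contra hne
    rw [Set.not_nonempty_iff_eq_empty] at hne
    exact h (by rw [maxPathWeight, ← hA, hne, sSup_empty])
  obtain ⟨p, h1, h2, h3, h4, h5⟩ := hne.csSup_mem hfin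
  exact ⟨p, h1, h2, h3, h4, by rw [maxPathWeight, ← hA]; exact h5⟩

lemma head?_take' {α : Type*} (p : List α) (m : ℕ) (h : 1 ≤ m) :
    (p.take m).head? = p.head? := by
  cases p <;> cases m <;> simp_all [List.take_succ_cons]

theorem stmt_16 {V : Type*} [DecidableEq V] [Fintype V] (w : V → V → ℝ)
    (n : ℕ) (hn : Fintype.card V = n) (v u : V) (j : ℕ) (hj1 : 1 ≤ j) (hj2 : j ≤ n) :
    (∀ p : List V, p.Nodup → p.toFinset = Finset.univ →
      pathWeight w p = pathWeight w (p.take j) + pathWeight w (p.drop (j - 1))) ∧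
    maxPathWeight w Finset.univ v u =
      sSup {x : EReal | ∃ S' : Finset V, S'.card = j ∧ v ∈ S' ∧
        ∃ y ∈ S', x = maxPathWeight w S' v y +
          maxPathWeight w ((Finset.univ \ S') ∪ {y}) y u} := by
  classical
  obtain ⟨k, rfl⟩ : ∃ k, j = k + 1 := ⟨j - 1, (Nat.succ_pred_eq_of_pos hj1).symm⟩
  have hlen : ∀ p : List V, p.Nodup → p.toFinset = Finset.univ → p.length = n := by
    intro p hnd htf
    rw [← List.toFinset_card_of_nodup hnd, htf, ← hn]
    exact Finset.card_univ
  have part1 : ∀ p : List V, p.Nodup → p.toFinset = Finset.univ →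
      pathWeight w p = pathWeight w (p.take (k+1)) + pathWeight w (p.drop (k+1-1)) := by
    intro p hnd htf
    have : k + 1 ≤ p.length := by rw [hlen p hnd htf]; exact hj2
    simpa using pathWeight_split w k p this
  refine ⟨part1, le_antisymm ?_ ?_⟩
  · -- ≤ direction
    apply sSup_le
    rintro x ⟨p, hnd, htf, hhd, hlast, rfl⟩
    have hl : p.length = n := hlen p hnd htf
    have hk : k < p.length := by omega
    set y := p[k] with hy
    set p1 := p.take (k+1) with hp1
    set p2 := p.drop k with hp2
    have hp1e : p1 = p.take k ++ [y] := by
      rw [hp1, List.take_succ, List.getElem?_eq_getElem hk]; rfl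
    have hp2e : p2 = y :: p.drop (k+1) := List.drop_eq_getElem_cons hk
    have hp1nd : p1.Nodup := hnd.sublist (List.take_sublist _ _)
    have hp2nd : p2.Nodup := hnd.sublist (List.drop_sublist _ _)
    have hp1last : p1.getLast? = some y := by rw [hp1e]; exact List.getLast?_concat
    have hp1hd : p1.head? = some v := by
      rw [hp1, head?_take' p _ (by omega)]; exact hhd
    have hp2hd : p2.head? = some y := by rw [hp2e]; rfl
    have hp2ne : p2 ≠ [] := by rw [hp2e]; simp
    have hp2last : p2.getLast? = some u := by
      have := hlast
      conv at this => lhs; rw [← List.take_append_drop k p]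
      rw [List.getLast?_append] at this
      rw [List.getLast?_eq_getLast hp2ne] at this ⊢
      simpa using this
    set S' : Finset V := p1.toFinset with hS'
    have hcard : S'.card = k + 1 := by
      rw [hS', List.toFinset_card_of_nodup hp1nd, hp1, List.length_take]
      omega
    have hvS' : v ∈ S' := by
      rw [hS', List.mem_toFinset]
      exact List.mem_of_mem_head? hp1hd
    have hyS' : y ∈ S' := by
      rw [hS', List.mem_toFinset]
      exact List.mem_of_mem_getLast? hp1last
    have hsplit : S' ∪ (p.drop (k+1)).toFinset = Finset.univ := by
      rw [hS', ← List.toFinset_append, List.take_append_drop, htf]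
    have hdisj : Disjoint S' (p.drop (k+1)).toFinset := by
      rw [hS', List.disjoint_toFinset_iff_disjoint]
      apply List.disjoint_of_nodup_append
      rw [List.take_append_drop]
      exact hnd
    have hdroptf : (p.drop (k+1)).toFinset = Finset.univ \ S' := by
      rw [← hsplit, Finset.union_sdiff_cancel_left hdisj]
    have hp2tf : p2.toFinset = (Finset.univ \ S') ∪ {y} := by
      rw [hp2e, List.toFinset_cons, hdroptf, Finset.insert_eq, Finset.union_comm]
    have hL1 : (pathWeight w p1 : EReal) ≤ maxPathWeight w S' v y :=
      le_maxPathWeight w S' v y p1 hp1nd rfl hp1hd hp1last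
    have hL2 : (pathWeight w p2 : EReal) ≤
        maxPathWeight w ((Finset.univ \ S') ∪ {y}) y u :=
      le_maxPathWeight w _ y u p2 hp2nd hp2tf hp2hd hp2last
    have hx : pathWeight w p = pathWeight w p1 + pathWeight w p2 := by
      simpa using part1 p hnd htf
    refine le_trans ?_ (le_sSup ⟨S', hcard, hvS', y, hyS', rfl⟩)
    rw [hx, EReal.coe_add]
    exact add_le_add hL1 hL2
  · -- ≥ direction
    apply sSup_le
    rintro x ⟨S', hcard, hvS', y, hyS', rfl⟩
    by_cases hb1 : maxPathWeight w S' v y = ⊥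
    · rw [hb1, EReal.bot_add]; exact bot_le
    by_cases hb2 : maxPathWeight w ((Finset.univ \ S') ∪ {y}) y u = ⊥
    · rw [hb2, EReal.add_bot]; exact bot_le
    obtain ⟨p1, h1nd, h1tf, h1hd, h1last, hL1⟩ := maxPathWeight_attained w S' v y hb1
    obtain ⟨p2, h2nd, h2tf, h2hd, h2last, hL2⟩ :=
      maxPathWeight_attained w ((Finset.univ \ S') ∪ {y}) y u hb2
    rcases p2 with _ | ⟨y', t⟩
    · simp at h2hd
    have hy' : y = y' := by symm; simpa using h2hd
    subst hy'
    have hynt : y ∉ t := by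
      have := h2nd
      simp [List.nodup_cons] at this
      exact this.1
    have htnd : t.Nodup := (List.nodup_cons.mp h2nd).2
    have httf : t.toFinset = Finset.univ \ S' := by
      ext z
      simp only [Finset.mem_sdiff, Finset.mem_univ, true_and]
      constructor
      · intro hz
        have hz2 : z ∈ (Finset.univ \ S') ∪ {y} := by
          rw [← h2tf]; simp [List.mem_toFinset.mp hz]
        rcases Finset.mem_union.mp hz2 with h | h
        · exact (Finset.mem_sdiff.mp h).2
        · exact absurd (List.mem_toFinset.mp hz)
            (by rw [Finset.mem_singleton.mp h] at hz ⊢; exact hynt)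
      · intro hz
        have hz2 : z ∈ ((y :: t).toFinset : Finset V) := by
          rw [h2tf]
          exact Finset.mem_union_left _ (Finset.mem_sdiff.mpr ⟨Finset.mem_univ _, hz⟩)
        rcases List.mem_cons.mp (List.mem_toFinset.mp hz2) with rfl | h
        · exact absurd hyS' hz
        · exact List.mem_toFinset.mpr h
    have hdisj : p1.Disjoint t := by
      rw [← List.disjoint_toFinset_iff_disjoint, h1tf, httf]
      exact Finset.disjoint_sdiff
    set p : List V := p1 ++ t with hp
    have hpnd : p.Nodup := h1nd.append htnd hdisj
    have hptf : p.toFinset = Finset.univ := by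
      rw [hp, List.toFinset_append, h1tf, httf,
        Finset.union_sdiff_of_subset (Finset.subset_univ _)]
    have hp1ne : p1 ≠ [] := by rintro rfl; simp at h1hd
    have hphd : p.head? = some v := by
      rw [hp, List.head?_append, h1hd]; rfl
    have hplast : p.getLast? = some u := by
      rcases t with _ | ⟨b, t'⟩
      · have : y = u := by simpa using h2last
        rw [hp]
        simpa [← this] using h1last
      · rw [hp, List.getLast?_append]
        have : (b :: t').getLast? = some u := by
          have := h2last
          rw [show (y :: b :: t') = [y] ++ (b :: t') by rfl, List.getLast?_append] at this
          rw [List.getLast?_eq_getLast (List.cons_ne_nil b t')] at this ⊢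
          simpa using this
        rw [this]; rfl
    have hpw : pathWeight w p = pathWeight w p1 + pathWeight w (y :: t) :=
      pathWeight_append w p1 t y h1last
    rw [hL1, hL2, ← EReal.coe_add, ← hpw]
    exact le_maxPathWeight w _ v u p hpnd hptf hphd hplast
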